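/- Define Ψ(μ) := −2v₁² + 6v₁ − 5 + 1/v₁ and Ξ(μ) := −4v₁² + 20v₁ − 17 + 2/v₁ − 1/v₁² − 12·ln(v₁), where v₁ = 2/(2+μ). Then on [0,2] the function μ ↦ Ψ(μ) is continuous and strictly decreasing with Ψ(0) = 0 and Ψ(2) = −1/2, and the function μ ↦ Ξ(μ) is continuous and strictly increasing with Ξ(0) = 0 and Ξ(2) = 12·ln(2) − 8. -/

import Mathlib

open MeasureTheory Set

noncomputable section

def IsCopula (C : ℝ → ℝ → ℝ) : Prop :=
  (∀ u ∈ Icc (0:ℝ) 1, ∀ v ∈ Icc (0:ℝ) 1, C u v ∈ Icc (0:ℝ) 1) ∧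
  (∀ u ∈ Icc (0:ℝ) 1, C u 0 = 0 ∧ C u 1 = u) ∧
  (∀ v ∈ Icc (0:ℝ) 1, C 0 v = 0 ∧ C 1 v = v) ∧
  (∀ u₁ ∈ Icc (0:ℝ) 1, ∀ u₂ ∈ Icc (0:ℝ) 1, ∀ v₁ ∈ Icc (0:ℝ) 1, ∀ v₂ ∈ Icc (0:ℝ) 1,
    u₁ ≤ u₂ → v₁ ≤ v₂ → 0 ≤ C u₂ v₂ - C u₁ v₂ - C u₂ v₁ + C u₁ v₁)

/-- The (a.e. defined) partial derivative of `C` with respect to its first argument. -/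
def d1 (C : ℝ → ℝ → ℝ) (t v : ℝ) : ℝ := deriv (fun s => C s v) t

/-- Chatterjee's rank correlation. -/
def xi (C : ℝ → ℝ → ℝ) : ℝ :=
  6 * (∫ v in (0:ℝ)..1, ∫ t in (0:ℝ)..1, (d1 C t v) ^ 2) - 2

/-- Spearman's footrule. -/
def psi (C : ℝ → ℝ → ℝ) : ℝ :=
  6 * (∫ v in (0:ℝ)..1, C v v) - 2

/-- Stochastically increasing: for each `v`, `t ↦ ∂₁C(t,v)` agrees a.e. on `[0,1]`
with a non-increasing function. -/
def IsSI (C : ℝ → ℝ → ℝ) : Prop :=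
  ∀ v ∈ Icc (0:ℝ) 1, ∃ g : ℝ → ℝ, AntitoneOn g (Icc (0:ℝ) 1) ∧
    (∀ᵐ t ∂(volume.restrict (Icc (0:ℝ) 1)), d1 C t v = g t)

/-- Closed form of the `ψ`-functional of `C↘_μ`, with `v₁ = 2/(2+μ)`. -/
def PsiMu (μ : ℝ) : ℝ :=
  -2 * (2 / (2 + μ)) ^ 2 + 6 * (2 / (2 + μ)) - 5 + 1 / (2 / (2 + μ))

/-- Closed form of the `ξ`-functional of `C↘_μ`, with `v₁ = 2/(2+μ)`. -/
def XiMu (μ : ℝ) : ℝ :=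
  -4 * (2 / (2 + μ)) ^ 2 + 20 * (2 / (2 + μ)) - 17 + 2 / (2 / (2 + μ))
    - 1 / (2 / (2 + μ)) ^ 2 - 12 * Real.log (2 / (2 + μ))

/-! Both closed forms are functions of `v₁ = 2/(2+μ)`, which decreases from `1` to `1/2` as `μ`
runs over `[0,2]`. In terms of `v` the derivatives factor as
`ψ'(v) = (2v-1)(1+2v(1-v))/v²` and `ξ'(v) = 2(2v-1)(v-1)(1+2v(1-v))/v³`, so on `(1/2,1)` the
first is positive and the second negative; composing with the decreasing map `μ ↦ v₁` swaps
the directions. -/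

def v₁ (μ : ℝ) : ℝ := 2 / (2 + μ)

def psiV (v : ℝ) : ℝ := -2 * v ^ 2 + 6 * v - 5 + 1 / v

def xiV (v : ℝ) : ℝ := -4 * v ^ 2 + 20 * v - 17 + 2 / v - 1 / v ^ 2 - 12 * Real.log v

lemma PsiMu_eq_psiV_comp : PsiMu = psiV ∘ v₁ := rfl

lemma XiMu_eq_xiV_comp : XiMu = xiV ∘ v₁ := rfl

lemma strictAntiOn_v₁ : StrictAntiOn v₁ (Ioi (-2)) := fun x hx y hy hxy =>
  div_lt_div_of_pos_left two_pos (by simp at hx; linarith) (by linarith)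

lemma continuousOn_v₁ : ContinuousOn v₁ (Ioi (-2)) :=
  continuousOn_const.div (continuousOn_const.add continuousOn_id)
    fun x hx => by simp at hx; linarith

lemma mapsTo_v₁ : MapsTo v₁ (Icc 0 2) (Icc (1 / 2) 1) := by
  rintro μ ⟨h0, h2⟩
  simp only [v₁, mem_Icc]
  constructor
  · rw [le_div_iff₀ (by linarith)]; linarith
  · rw [div_le_one (by linarith)]; linarith

lemma Icc_zero_two_subset_Ioi : Icc (0:ℝ) 2 ⊆ Ioi (-2) := fun x hx => by
  simp only [mem_Ioi]; linarith [hx.1]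

lemma Icc_half_one_subset_ne_zero : Icc (1 / 2 : ℝ) 1 ⊆ {0}ᶜ := fun x hx => by
  simp only [mem_compl_iff, mem_singleton_iff]; linarith [hx.1]

lemma continuousOn_psiV : ContinuousOn psiV {0}ᶜ := by
  unfold psiV
  exact ContinuousOn.add (by fun_prop) (continuousOn_const.div continuousOn_id fun _ h => h)

lemma continuousOn_xiV : ContinuousOn xiV {0}ᶜ := by
  have hpow : ∀ v ∈ ({0}ᶜ : Set ℝ), v ^ 2 ≠ 0 := fun v hv => pow_ne_zero 2 hv
  unfold xiV
  exact ((ContinuousOn.add (by fun_prop) (continuousOn_const.div continuousOn_id fun _ h => h)).sub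
    (continuousOn_const.div (continuousOn_id.pow 2) hpow)).sub
    (continuousOn_const.mul (Real.continuousOn_log))

lemma hasDerivAt_psiV {v : ℝ} (hv : v ≠ 0) :
    HasDerivAt psiV ((2 * v - 1) * (1 + 2 * v * (1 - v)) / v ^ 2) v := by
  have h : HasDerivAt psiV (-2 * (2 * v) + 6 - 1 / v ^ 2) v := by
    unfold psiV
    simp only [one_div]
    refine ((((hasDerivAt_pow 2 v).const_mul (-2)).add ((hasDerivAt_id' v).const_mul 6)).sub_const
      5).add (hasDerivAt_inv hv) |>.congr_deriv ?_
    ring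
  convert h using 1
  field_simp
  ring

lemma hasDerivAt_xiV {v : ℝ} (hv : v ≠ 0) :
    HasDerivAt xiV (2 * (2 * v - 1) * (v - 1) * (1 + 2 * v * (1 - v)) / v ^ 3) v := by
  have h : HasDerivAt xiV (-4 * (2 * v) + 20 - 2 / v ^ 2 + 2 / v ^ 3 - 12 / v) v := by
    unfold xiV
    simp only [div_eq_mul_inv, one_mul]
    refine (((((hasDerivAt_pow 2 v).const_mul (-4)).add ((hasDerivAt_id' v).const_mul 20)).sub_const
      17).add ((hasDerivAt_inv hv).const_mul 2) |>.sub ((hasDerivAt_pow 2 v).inv (pow_ne_zero 2 hv))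
      |>.sub ((Real.hasDerivAt_log hv).const_mul 12)).congr_deriv ?_
    field_simp
    ring
  convert h using 1
  field_simp
  ring

lemma strictMonoOn_psiV : StrictMonoOn psiV (Icc (1 / 2) 1) := by
  refine strictMonoOn_of_hasDerivWithinAt_pos (convex_Icc _ _)
    (continuousOn_psiV.mono Icc_half_one_subset_ne_zero)
    (fun v hv => (hasDerivAt_psiV (Icc_half_one_subset_ne_zero (interior_subset hv))).hasDerivWithinAt)
    fun v hv => ?_
  rw [interior_Icc] at hv
  obtain ⟨h1, h2⟩ := hv
  have : 0 < 2 * v - 1 := by linarith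
  have : 0 < 1 - v := by linarith
  positivity

lemma strictAntiOn_xiV : StrictAntiOn xiV (Icc (1 / 2) 1) := by
  refine strictAntiOn_of_hasDerivWithinAt_neg (convex_Icc _ _)
    (continuousOn_xiV.mono Icc_half_one_subset_ne_zero)
    (fun v hv => (hasDerivAt_xiV (Icc_half_one_subset_ne_zero (interior_subset hv))).hasDerivWithinAt)
    fun v hv => ?_
  rw [interior_Icc] at hv
  obtain ⟨h1, h2⟩ := hv
  have : 0 < 2 * v - 1 := by linarith
  have : 0 < 1 - v := by linarith
  have : v - 1 < 0 := by linarith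
  exact div_neg_of_neg_of_pos
    (mul_neg_of_neg_of_pos (mul_neg_of_pos_of_neg (by positivity) this) (by positivity))
    (by positivity)

/-- On `[0,2]`, `Ψ` is continuous and strictly decreasing from `0` to `-1/2`,
and `Ξ` is continuous and strictly increasing from `0` to `12·ln 2 − 8`. -/
theorem PsiMu_XiMu_monotone :
    ContinuousOn PsiMu (Icc (0:ℝ) 2) ∧ StrictAntiOn PsiMu (Icc (0:ℝ) 2) ∧
    PsiMu 0 = 0 ∧ PsiMu 2 = -(1 / 2) ∧
    ContinuousOn XiMu (Icc (0:ℝ) 2) ∧ StrictMonoOn XiMu (Icc (0:ℝ) 2) ∧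
    XiMu 0 = 0 ∧ XiMu 2 = 12 * Real.log 2 - 8 := by
  have hv := strictAntiOn_v₁.mono Icc_zero_two_subset_Ioi
  have hcv := continuousOn_v₁.mono Icc_zero_two_subset_Ioi
  have hmaps := mapsTo_v₁.mono_right Icc_half_one_subset_ne_zero
  rw [PsiMu_eq_psiV_comp, XiMu_eq_xiV_comp]
  refine ⟨continuousOn_psiV.comp hcv hmaps, strictMonoOn_psiV.comp_strictAntiOn hv mapsTo_v₁,
    by norm_num [psiV, v₁], by norm_num [psiV, v₁], continuousOn_xiV.comp hcv hmaps,
    strictAntiOn_xiV.comp hv mapsTo_v₁, by norm_num [xiV, v₁], ?_⟩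
  rw [Function.comp_apply, show v₁ 2 = 2⁻¹ by norm_num [v₁], xiV, Real.log_inv]
  norm_num
  ring
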